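/- arXiv:1603.02916 — 10 statements merged into one kernel-verified Lean document; each statement's English description precedes it below -/
import Mathlib

section
/- Let s be a sequence on the neuron set N = {1,...,n} with supp(s) = N, and let P_n be the set of skew-bias matrices of sequences that list each neuron of N exactly once (i.e., sequences of length n that are permutations of (1,2,...,n)). Then B_skew(s) lies in the convex hull of P_n. Concretely, B_skew(s) = (1/∏_{i=1}^n c_i(s)) · Σ_{I} B_skew(s_I), where the sum ranges over all index sets I ⊆ {1,...,ℓ} such that the subsequence s_I contains each neuron of N exactly once (there are exactly ∏_{i=1}^n c_i(s) such sets). -/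
open Finset

namespace NeuralSeq

/-- The bias count `c_{ij}(s)`: number of index pairs `k < k'` with `s_k = i` and `s_{k'} = j`. -/
def biasCount {n : ℕ} : List (Fin n) → Fin n → Fin n → ℕ
  | [], _, _ => 0
  | a :: t, i, j => (if a = i then t.count j else 0) + biasCount t i j

/-- The skew bias `β_{ij}(s)`. -/
noncomputable def skewBias {n : ℕ} (s : List (Fin n)) (i j : Fin n) : ℝ :=
  if 0 < s.count i ∧ 0 < s.count j then
    ((biasCount s i j : ℝ) - (biasCount s j i : ℝ)) / ((s.count i : ℝ) * (s.count j : ℝ))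
  else 0

/-- The skew-bias matrix `B_skew(s)`. -/
noncomputable def Bskew {n : ℕ} (s : List (Fin n)) : Matrix (Fin n) (Fin n) ℝ :=
  Matrix.of fun i j => skewBias s i j

/-- The probability bias `b_{ij}(s)` (meaningful when `i, j ∈ supp(s)`). -/
noncomputable def probBias {n : ℕ} (s : List (Fin n)) (i j : Fin n) : ℝ :=
  (biasCount s i j : ℝ) / ((s.count i : ℝ) * (s.count j : ℝ))

/-- The (unnormalized) center of mass `com_i(s)`, with 1-based indexing. -/
noncomputable def com {n : ℕ} (s : List (Fin n)) (i : Fin n) : ℝ :=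
  if 0 < s.count i then
    (∑ k : Fin s.length, if s.get k = i then ((k : ℕ) + 1 : ℝ) else 0) / (s.count i : ℝ)
  else ((s.length : ℝ) + 1) / 2

/-- The normalized center of mass `γ_i(s)`. -/
noncomputable def gamma {n : ℕ} (s : List (Fin n)) (i : Fin n) : ℝ :=
  (2 * com s i - 1) / (s.length : ℝ) - 1

/-- The firing rate `ρ_i(s)`. -/
noncomputable def rate {n : ℕ} (s : List (Fin n)) (i : Fin n) : ℝ :=
  (s.count i : ℝ) / (s.length : ℝ)

/-- A sequence is pure if for every pair of distinct active neurons, all spikes of one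
precede all spikes of the other (equivalently, `c_{ij}(s) = 0` or `c_{ji}(s) = 0`). -/
def IsPure {n : ℕ} (s : List (Fin n)) : Prop :=
  ∀ i j : Fin n, i ≠ j → 0 < s.count i → 0 < s.count j →
    biasCount s i j = 0 ∨ biasCount s j i = 0

/-- The subsequence `s_I` of `s` given by an index set `I`. -/
def subseqOf {n : ℕ} (s : List (Fin n)) (I : Finset (Fin s.length)) : List (Fin n) :=
  ((List.finRange s.length).filter (fun k => decide (k ∈ I))).map s.get

/-- The shuffling `s^π` of `s` by a permutation `π` of its index set. -/
def shuffle {n : ℕ} (s : List (Fin n)) (π : Equiv.Perm (Fin s.length)) : List (Fin n) :=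
  (List.finRange s.length).map (fun k => s.get (π k))

/-- The order-`m` bias count `c_v(s)`: the number of subsequences of `s` equal to `v`. -/
def orderCount {n : ℕ} : List (Fin n) → List (Fin n) → ℕ
  | _, [] => 1
  | [], _ :: _ => 0
  | a :: t, v :: vs => (if a = v then orderCount t vs else 0) + orderCount t (v :: vs)

end NeuralSeq

/-!
Choosing one spike `f i` of every neuron `i` identifies the index sets `I` for which `s_I` lists
every neuron once with the choice functions `f ∈ ∏ᵢ {k | s_k = i}`, and the skew bias of that
`s_I` at `(i, j)` is `[f i < f j] - [f j < f i]`. Summing over `f`, the coordinates other than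
`i` and `j` contribute the factor `∏_{m ≠ i, j} c_m`, and the sum over the pair `(f i, f j)` is
`c_{ij} - c_{ji} = c_i c_j β_{ij}`. So `B_skew(s)` is the uniform average of the `B_skew(s_I)`.
-/

theorem Fintype.card_mul_card_smul_sum_pi {ι : Type*} [Fintype ι] [DecidableEq ι]
    {κ : ι → Type*} [∀ i, Fintype (κ i)] {M : Type*} [AddCommMonoid M] {i j : ι} (hij : i ≠ j)
    (g : κ i → κ j → M) :
    (Fintype.card (κ i) * Fintype.card (κ j)) • ∑ f : (∀ m, κ m), g (f i) (f j) =
      (∏ m, Fintype.card (κ m)) • ∑ a, ∑ b, g a b := by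
  let R := ∀ m : {m' : {m // m ≠ i} // m' ≠ ⟨j, hij.symm⟩}, κ m.1.1
  let e : (∀ m, κ m) ≃ κ i × κ j × R := (Equiv.piSplitAt i κ).trans
    ((Equiv.refl _).prodCongr (Equiv.piSplitAt (⟨j, hij.symm⟩ : {m // m ≠ i}) _))
  have sum_eq : ∑ f : (∀ m, κ m), g (f i) (f j) = Fintype.card R • ∑ a, ∑ b, g a b := by
    rw [Fintype.sum_equiv e (fun f => g (f i) (f j)) (fun p => g p.1 p.2.1) fun _ => rfl]
    simp only [Fintype.sum_prod_type, sum_const, card_univ, smul_sum]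
  have card_eq : ∏ m, Fintype.card (κ m) =
      Fintype.card (κ i) * (Fintype.card (κ j) * Fintype.card R) := by
    rw [← Fintype.card_pi, Fintype.card_congr e, Fintype.card_prod, Fintype.card_prod]
  rw [sum_eq, card_eq, smul_smul, mul_assoc]

theorem inv_card_smul_sum_mem_convexHull {R E ι : Type*} [Field R] [LinearOrder R]
    [IsStrictOrderedRing R] [AddCommGroup E] [Module R E] {s : Set E} {t : Finset ι}
    (ht : t.Nonempty) {z : ι → E} (hz : ∀ x ∈ t, z x ∈ s) :
    (#t : R)⁻¹ • ∑ x ∈ t, z x ∈ convexHull R s := by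
  rw [smul_sum]
  exact (convex_convexHull R s).sum_mem (fun _ _ => by positivity)
    (by simp [ht.card_pos.ne']) fun x hx => subset_convexHull R s (hz x hx)

namespace NeuralSeq

variable {n : ℕ}

theorem count_map_of_nodup {α β : Type*} [DecidableEq α] [DecidableEq β] (g : α → β) {v : List α}
    (hv : v.Nodup) (b : β) : (v.map g).count b = #{k ∈ v.toFinset | g k = b} := by
  rw [List.count, List.countP_map, List.countP_eq_length_filter, ← List.toFinset_card_of_nodup
    (hv.filter _), List.toFinset_filter]
  simp

theorem biasCount_map_of_sorted {α : Type*} [LinearOrder α] (g : α → Fin n) {v : List α}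
    (hv : v.Pairwise (· < ·)) (i j : Fin n) :
    biasCount (v.map g) i j =
      ∑ k ∈ {k ∈ v.toFinset | g k = i}, ∑ k' ∈ {k' ∈ v.toFinset | g k' = j},
        if k < k' then 1 else 0 := by
  induction v with
  | nil => simp [biasCount]
  | cons a v ih =>
    obtain ⟨ha, hv⟩ := List.pairwise_cons.mp hv
    have haV : a ∉ v.toFinset := fun h => lt_irrefl a (ha a (List.mem_toFinset.mp h))
    -- `a` precedes every later index, so it only ever occurs as the first entry of a pair
    have first : ∑ k' ∈ {k' ∈ (a :: v).toFinset | g k' = j}, (if a < k' then 1 else 0) =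
        (v.map g).count j := by
      rw [count_map_of_nodup g hv.nodup, List.toFinset_cons, filter_insert]
      have : ∀ k' ∈ {k' ∈ v.toFinset | g k' = j}, (if a < k' then 1 else 0) = 1 := fun k' hk' =>
        if_pos (ha k' (List.mem_toFinset.mp (mem_filter.mp hk').1))
      split_ifs
      · rw [sum_insert (by simp [haV]), if_neg (lt_irrefl a), zero_add, sum_congr rfl this,
          card_eq_sum_ones]
      · rw [sum_congr rfl this, card_eq_sum_ones]
    have later : ∀ k ∈ v.toFinset,
        ∑ k' ∈ {k' ∈ (a :: v).toFinset | g k' = j}, (if k < k' then 1 else 0) =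
          ∑ k' ∈ {k' ∈ v.toFinset | g k' = j}, (if k < k' then 1 else 0) := by
      intro k hk
      rw [List.toFinset_cons, filter_insert]
      split_ifs
      · rw [sum_insert (by simp [haV]), if_neg (ha k (List.mem_toFinset.mp hk)).not_gt, zero_add]
      · rfl
    rw [List.map_cons, biasCount, ih hv, ← first,
      ← sum_congr rfl fun k hk => later k (mem_filter.mp hk).1]
    generalize {k' ∈ (a :: v).toFinset | g k' = j} = B
    rw [List.toFinset_cons, filter_insert]
    split_ifs
    · rw [sum_insert (by simp [haV])]
    · rw [zero_add]

section Subsequence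

variable (s : List (Fin n)) (I : Finset (Fin s.length))

theorem pairwise_lt_filter_finRange :
    ((List.finRange s.length).filter (fun k => decide (k ∈ I))).Pairwise (· < ·) :=
  (List.pairwise_lt_finRange _).sublist List.filter_sublist

theorem toFinset_filter_finRange :
    ((List.finRange s.length).filter (fun k => decide (k ∈ I))).toFinset = I := by
  ext k; simp

theorem count_subseqOf (i : Fin n) : (subseqOf s I).count i = #{k ∈ I | s.get k = i} := by
  rw [subseqOf, count_map_of_nodup _ (pairwise_lt_filter_finRange s I).nodup,
    toFinset_filter_finRange]

theorem biasCount_subseqOf (i j : Fin n) :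
    biasCount (subseqOf s I) i j =
      ∑ k ∈ {k ∈ I | s.get k = i}, ∑ k' ∈ {k' ∈ I | s.get k' = j}, if k < k' then 1 else 0 := by
  rw [subseqOf, biasCount_map_of_sorted _ (pairwise_lt_filter_finRange s I),
    toFinset_filter_finRange]

theorem subseqOf_univ : subseqOf s univ = s := by
  simp [subseqOf, List.map_get_finRange]

end Subsequence

theorem card_spikes (s : List (Fin n)) (i : Fin n) :
    Fintype.card {k : Fin s.length // s.get k = i} = s.count i := by
  rw [Fintype.card_subtype, ← count_subseqOf, subseqOf_univ]

theorem biasCount_eq_sum_spikes (s : List (Fin n)) (i j : Fin n) :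
    biasCount s i j = ∑ a : {k : Fin s.length // s.get k = i},
      ∑ b : {k : Fin s.length // s.get k = j}, if a.1 < b.1 then 1 else 0 := by
  conv_lhs => rw [← subseqOf_univ s, biasCount_subseqOf]
  simp only [← sum_subtype_eq_sum_filter, subtype_univ]

def choiceSet (s : List (Fin n)) (f : ∀ i : Fin n, {k : Fin s.length // s.get k = i}) :
    Finset (Fin s.length) :=
  univ.image fun i => (f i).1

def transversals (s : List (Fin n)) : Finset (Finset (Fin s.length)) :=
  univ.filter fun I => ∀ i : Fin n, (subseqOf s I).count i = 1

section Transversals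

variable (s : List (Fin n))

theorem filter_choiceSet (f : ∀ i : Fin n, {k : Fin s.length // s.get k = i}) (i : Fin n) :
    {k ∈ choiceSet s f | s.get k = i} = {(f i).1} := by
  ext k
  simp only [choiceSet, mem_filter, mem_image, mem_univ, true_and, mem_singleton]
  constructor
  · rintro ⟨⟨i', rfl⟩, rfl⟩
    rw [(f i').2]
  · rintro rfl
    exact ⟨⟨i, rfl⟩, (f i).2⟩

theorem choiceSet_injective : Function.Injective (choiceSet s) := by
  intro f g h
  funext i
  apply Subtype.ext
  rw [← mem_singleton, ← filter_choiceSet s g, ← h, filter_choiceSet, mem_singleton]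

theorem transversals_eq_image_choiceSet : transversals s = univ.image (choiceSet s) := by
  ext I
  simp only [transversals, mem_filter, mem_univ, true_and, mem_image, count_subseqOf]
  constructor
  · intro hI
    choose a ha using fun i => card_eq_one.mp (hI i)
    have mem_a : ∀ i, a i ∈ {k ∈ I | s.get k = i} := fun i => (ha i).symm ▸ mem_singleton_self _
    refine ⟨fun i => ⟨a i, (mem_filter.mp (mem_a i)).2⟩, ?_⟩
    ext k
    simp only [choiceSet, mem_image, mem_univ, true_and]
    constructor
    · rintro ⟨i, rfl⟩
      exact (mem_filter.mp (mem_a i)).1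
    · intro hk
      have : k ∈ {k' ∈ I | s.get k' = s.get k} := mem_filter.mpr ⟨hk, rfl⟩
      rw [ha] at this
      exact ⟨s.get k, (mem_singleton.mp this).symm⟩
  · rintro ⟨f, rfl⟩ i
    rw [filter_choiceSet, card_singleton]

theorem card_transversals : #(transversals s) = ∏ i : Fin n, s.count i := by
  rw [transversals_eq_image_choiceSet, card_image_of_injective _ (choiceSet_injective s),
    card_univ, Fintype.card_pi]
  simp only [card_spikes]

theorem sum_transversals {M : Type*} [AddCommMonoid M] (F : Finset (Fin s.length) → M) :
    ∑ I ∈ transversals s, F I = ∑ f : ∀ i : Fin n, {k : Fin s.length // s.get k = i},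
      F (choiceSet s f) := by
  rw [transversals_eq_image_choiceSet, sum_image fun f _ g _ h => choiceSet_injective s h]

theorem biasCount_subseqOf_choiceSet (f : ∀ i : Fin n, {k : Fin s.length // s.get k = i})
    (i j : Fin n) :
    biasCount (subseqOf s (choiceSet s f)) i j = if (f i).1 < (f j).1 then 1 else 0 := by
  rw [biasCount_subseqOf, filter_choiceSet, filter_choiceSet, sum_singleton, sum_singleton]

theorem skewBias_subseqOf_choiceSet (f : ∀ i : Fin n, {k : Fin s.length // s.get k = i})
    (i j : Fin n) :
    skewBias (subseqOf s (choiceSet s f)) i j =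
      (if (f i).1 < (f j).1 then 1 else 0) - (if (f j).1 < (f i).1 then 1 else 0) := by
  have count_one (m : Fin n) : (subseqOf s (choiceSet s f)).count m = 1 := by
    rw [count_subseqOf, filter_choiceSet, card_singleton]
  rw [skewBias, count_one, count_one, biasCount_subseqOf_choiceSet,
    biasCount_subseqOf_choiceSet]
  push_cast [apply_ite (Nat.cast : ℕ → ℝ)]
  simp

end Transversals

theorem prod_count_mul_skewBias (s : List (Fin n)) (hsupp : ∀ i : Fin n, 0 < s.count i)
    (i j : Fin n) :
    (∏ m : Fin n, (s.count m : ℝ)) * skewBias s i j =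
      ∑ I ∈ transversals s, skewBias (subseqOf s I) i j := by
  simp only [sum_transversals, skewBias_subseqOf_choiceSet]
  obtain rfl | hij := eq_or_ne i j
  · simp [skewBias]
  have key := Fintype.card_mul_card_smul_sum_pi
    (κ := fun m => {k : Fin s.length // s.get k = m}) hij fun a b =>
      (if a.1 < b.1 then 1 else 0) - (if b.1 < a.1 then (1 : ℝ) else 0)
  have skew_count : ∑ a : {k : Fin s.length // s.get k = i},
      ∑ b : {k : Fin s.length // s.get k = j},
        ((if a.1 < b.1 then 1 else 0) - (if b.1 < a.1 then (1 : ℝ) else 0)) =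
      biasCount s i j - biasCount s j i := by
    rw [biasCount_eq_sum_spikes, biasCount_eq_sum_spikes s j i]
    push_cast
    simp only [sum_sub_distrib]
    exact congrArg _ sum_comm
  simp only [card_spikes, skew_count, nsmul_eq_mul] at key
  push_cast at key
  have hi : (0 : ℝ) < s.count i := by exact_mod_cast hsupp i
  have hj : (0 : ℝ) < s.count j := by exact_mod_cast hsupp j
  rw [skewBias, if_pos ⟨hsupp i, hsupp j⟩, mul_div_assoc', div_eq_iff (by positivity), ← key]
  ring

theorem Bskew_eq_inv_prod_smul_sum (s : List (Fin n)) (hsupp : ∀ i : Fin n, 0 < s.count i) :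
    Bskew s = (∏ i : Fin n, (s.count i : ℝ))⁻¹ • ∑ I ∈ transversals s, Bskew (subseqOf s I) := by
  have hprod : (∏ i : Fin n, (s.count i : ℝ)) ≠ 0 :=
    prod_ne_zero_iff.mpr fun i _ => by exact_mod_cast (hsupp i).ne'
  ext i j
  simp only [Bskew, Matrix.smul_apply, Matrix.sum_apply, Matrix.of_apply, smul_eq_mul,
    ← prod_count_mul_skewBias s hsupp, inv_mul_cancel_left₀ hprod]

end NeuralSeq

open NeuralSeq in
/-- every full-support sequence's skew-bias matrix lies in the convex hull of
the skew-bias matrices of one-spike-per-neuron sequences; concretely it is the average of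
the skew-bias matrices of the `∏ c_i(s)` subsequences containing each neuron exactly once. -/
theorem bias_in_fundamental_polytope {n : ℕ} (s : List (Fin n))
    (hsupp : ∀ i : Fin n, 0 < s.count i) :
    Bskew s ∈ convexHull ℝ {M : Matrix (Fin n) (Fin n) ℝ |
        ∃ t : List (Fin n), (∀ i : Fin n, t.count i = 1) ∧ M = Bskew t} ∧
    (Finset.univ.filter (fun I : Finset (Fin s.length) =>
        ∀ i : Fin n, (subseqOf s I).count i = 1)).card = ∏ i : Fin n, s.count i ∧
    Bskew s = (∏ i : Fin n, (s.count i : ℝ))⁻¹ •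
      ∑ I ∈ Finset.univ.filter (fun I : Finset (Fin s.length) =>
        ∀ i : Fin n, (subseqOf s I).count i = 1), Bskew (subseqOf s I) := by
  have average := Bskew_eq_inv_prod_smul_sum s hsupp
  refine ⟨?_, card_transversals s, average⟩
  have card_eq : (∏ i : Fin n, (s.count i : ℝ)) = #(transversals s) := by
    rw [card_transversals]; push_cast; rfl
  have nonempty : (transversals s).Nonempty :=
    card_pos.mp (card_transversals s ▸ prod_pos fun i _ => hsupp i)
  rw [average, card_eq]
  exact inv_card_smul_sum_mem_convexHull nonempty fun I hI =>
    ⟨subseqOf s I, (mem_filter.mp hI).2, rfl⟩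
end

section
/- For every n ≥ 1 and every matrix A ∈ {-1,0,1}^{n×n} with A_{ii} = 0 for all i and A_{ji} = -A_{ij} for all i, j (i.e., A is the adjacency matrix of a simple digraph encoded skew-symmetrically), there exists a sequence s on the neuron set N = {1,...,n} with supp(s) = N such that sign(β_{ij}(s)) = A_{ij} for all i, j ∈ N. -/
open Finset

/-!
The skew count `c_ij - c_ji` is additive under concatenation up to the cross term
`c_i(x) c_j(y) - c_j(x) c_i(y)`. Hence it vanishes on a palindrome `x ++ x.reverse`, and the cross
terms cancel when a sequence is wrapped as `[a, b] ++ m ++ [a, b]`, which adds exactly twice the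
skew count of `[a, b]`. Start from the palindrome `1 … n n … 1`, which has full support, and wrap
it once for every edge `i → j` (that is, `A i j = 1`). The skew count of `(i, j)` becomes `2 A_ij`,
and the skew bias is this count divided by a positive number.
-/

open Classical in
theorem Finset.count_toList {α : Type*} [BEq α] [LawfulBEq α] (S : Finset α) (a : α) :
    S.toList.count a = if a ∈ S then 1 else 0 := by
  split_ifs with h
  · exact List.count_eq_one_of_mem S.nodup_toList (Finset.mem_toList.2 h)
  · exact List.count_eq_zero.2 (by simpa using h)

theorem Real.sign_div_of_pos {x d : ℝ} (hd : 0 < d) : Real.sign (x / d) = Real.sign x := by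
  rcases lt_trichotomy x 0 with h | rfl | h
  · rw [Real.sign_of_neg h, Real.sign_of_neg (div_neg_of_neg_of_pos h hd)]
  · rw [zero_div]
  · rw [Real.sign_of_pos h, Real.sign_of_pos (div_pos h hd)]

theorem ite_eq_one_sub_ite_neg_eq_one {a : ℝ} (ha : a = -1 ∨ a = 0 ∨ a = 1) :
    ((if a = 1 then 1 else 0) - if -a = 1 then 1 else 0 : ℝ) = a := by
  rcases ha with rfl | rfl | rfl <;> norm_num

namespace NeuralSeq

variable {n : ℕ}

theorem biasCount_append (x y : List (Fin n)) (i j : Fin n) :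
    biasCount (x ++ y) i j = biasCount x i j + x.count i * y.count j + biasCount y i j := by
  induction x with
  | nil => simp [biasCount]
  | cons a t ih =>
    by_cases h : a = i
    · subst h; simp [biasCount, ih]; ring
    · simp [biasCount, ih, h]

theorem biasCount_reverse (s : List (Fin n)) (i j : Fin n) :
    biasCount s.reverse i j = biasCount s j i := by
  induction s with
  | nil => rfl
  | cons a t ih =>
    rw [List.reverse_cons, biasCount_append, ih]
    by_cases h : a = j <;> simp [biasCount, h, add_comm]

def skewCount (s : List (Fin n)) (i j : Fin n) : ℤ :=
  biasCount s i j - biasCount s j i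

theorem skewCount_append (x y : List (Fin n)) (i j : Fin n) :
    skewCount (x ++ y) i j = skewCount x i j + skewCount y i j
      + (x.count i * y.count j - x.count j * y.count i : ℤ) := by
  simp only [skewCount, biasCount_append]; push_cast; ring

theorem skewCount_reverse (s : List (Fin n)) (i j : Fin n) :
    skewCount s.reverse i j = -skewCount s i j := by
  simp only [skewCount, biasCount_reverse]; ring

theorem skewCount_append_reverse_self (x : List (Fin n)) (i j : Fin n) :
    skewCount (x ++ x.reverse) i j = 0 := by
  rw [skewCount_append, skewCount_reverse]; simp only [List.count_reverse]; ring

theorem skewCount_sandwich (x m : List (Fin n)) (i j : Fin n) :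
    skewCount (x ++ m ++ x) i j = 2 * skewCount x i j + skewCount m i j := by
  simp only [skewCount_append, List.count_append]; push_cast; ring

theorem biasCount_pair (a b i j : Fin n) :
    biasCount [a, b] i j = if (a, b) = (i, j) then 1 else 0 := by
  by_cases ha : a = i <;> by_cases hb : b = j <;> simp [biasCount, ha, hb]

theorem skewCount_pair (a b i j : Fin n) :
    skewCount [a, b] i j
      = (if (a, b) = (i, j) then 1 else 0) - if (a, b) = (j, i) then 1 else 0 := by
  simp only [skewCount, biasCount_pair]; push_cast; rfl

def wrapPairs (es : List (Fin n × Fin n)) (m : List (Fin n)) : List (Fin n) :=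
  es.foldr (fun e t => [e.1, e.2] ++ t ++ [e.1, e.2]) m

theorem mem_wrapPairs {es : List (Fin n × Fin n)} {m : List (Fin n)} {k : Fin n} (hk : k ∈ m) :
    k ∈ wrapPairs es m := by
  induction es with
  | nil => exact hk
  | cons e es ih => simp [wrapPairs, List.foldr_cons] at ih ⊢; tauto

theorem skewCount_wrapPairs (es : List (Fin n × Fin n)) (m : List (Fin n)) (i j : Fin n) :
    skewCount (wrapPairs es m) i j
      = skewCount m i j + 2 * ((es.count (i, j) : ℤ) - es.count (j, i)) := by
  induction es with
  | nil => simp [wrapPairs]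
  | cons e es ih =>
    rw [wrapPairs, List.foldr_cons, ← wrapPairs, skewCount_sandwich, ih, skewCount_pair]
    simp only [List.count_cons, beq_iff_eq]
    push_cast; ring

theorem sign_skewBias {s : List (Fin n)} {i j : Fin n} (hi : 0 < s.count i)
    (hj : 0 < s.count j) : Real.sign (skewBias s i j) = Real.sign (skewCount s i j) := by
  rw [skewBias, if_pos ⟨hi, hj⟩, skewCount, Real.sign_div_of_pos (by positivity)]
  push_cast; rfl

end NeuralSeq

open NeuralSeq in
theorem every_bias_network_possible_general {n : ℕ}
    (A : Matrix (Fin n) (Fin n) ℝ)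
    (hval : ∀ i j : Fin n, A i j = -1 ∨ A i j = 0 ∨ A i j = 1)
    (hskew : ∀ i j : Fin n, A j i = -A i j) :
    ∃ s : List (Fin n), (∀ i : Fin n, 0 < s.count i) ∧
      ∀ i j : Fin n, Real.sign (skewBias s i j) = A i j := by
  classical
  let E := (univ.filter fun e : Fin n × Fin n => A e.1 e.2 = 1).toList
  let s := wrapPairs E (List.finRange n ++ (List.finRange n).reverse)
  have hpos : ∀ i, 0 < s.count i := fun i => List.count_pos_iff.2 (mem_wrapPairs (by simp))
  have hE : ∀ i j, (E.count (i, j) : ℝ) = if A i j = 1 then 1 else 0 := fun i j => by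
    simp [E, Finset.count_toList]
  refine ⟨s, hpos, fun i j => ?_⟩
  have hskewCount : (skewCount s i j : ℝ) = 2 * A i j := by
    rw [skewCount_wrapPairs, skewCount_append_reverse_self]
    push_cast
    rw [hE, hE, hskew i j, ite_eq_one_sub_ite_neg_eq_one (hval i j), zero_add]
  rw [sign_skewBias (hpos i) (hpos j), hskewCount]
  rcases hval i j with h | h | h <;> norm_num [h, Real.sign_of_pos, Real.sign_of_neg]

open NeuralSeq in
/-- every simple digraph (encoded as a skew-symmetric `{-1,0,1}`-matrix)
is realizable as the bias network of some full-support sequence. -/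
theorem every_bias_network_possible {n : ℕ} (hn : 1 ≤ n)
    (A : Matrix (Fin n) (Fin n) ℝ)
    (hval : ∀ i j : Fin n, A i j = -1 ∨ A i j = 0 ∨ A i j = 1)
    (hdiag : ∀ i : Fin n, A i i = 0)
    (hskew : ∀ i j : Fin n, A j i = -A i j) :
    ∃ s : List (Fin n), (∀ i : Fin n, 0 < s.count i) ∧
      ∀ i j : Fin n, Real.sign (skewBias s i j) = A i j :=
  every_bias_network_possible_general A hval hskew
end

section
/- For every sequence s on the neuron set N = {1,...,n} of length ℓ ≥ 1 and every neuron i ∈ N, γ_i(s) = Σ_{j=1}^n β_{ji}(s)·ρ_j(s); that is, the normalized center-of-mass vector γ(s) equals B_skew(s)^T applied to the firing-rate vector ρ(s). -/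
open Finset

/-! With `P_i = Σ_k [s_k = i] k` the sum of the 1-based positions of `i`, the spikes preceding
the occurrences of `i` number `Σ_j c_{ji} = P_i - c_i`, and since every spike of `i` is paired
with each of the other `ℓ - 1` spikes, `Σ_j (c_{ji} - c_{ij}) = 2 P_i - c_i (ℓ + 1)`. Divided by
`c_i ℓ` this is both `γ_i` and `Σ_j β_{ji} ρ_j`. A neuron that never fires has `γ_i = 0` and a
zero column in `B_skew`. -/

namespace NeuralSeq

variable {n : ℕ}

lemma sum_count_eq_length (s : List (Fin n)) : ∑ j : Fin n, s.count j = s.length := by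
  simpa using Multiset.sum_count_eq_card (s := univ) (m := (s : Multiset (Fin n))) (by simp)

lemma sum_univ_get_cons {α M : Type*} [AddCommMonoid M] (f : ℕ → α → M) (a : α) (t : List α) :
    ∑ k : Fin (a :: t).length, f k ((a :: t).get k) =
      f 0 a + ∑ k : Fin t.length, f (k + 1) (t.get k) := by
  simp [Fin.sum_univ_succ]

lemma count_eq_sum_ite_get (s : List (Fin n)) (i : Fin n) :
    s.count i = ∑ k : Fin s.length, if s.get k = i then 1 else 0 := by
  induction s with
  | nil => simp
  | cons a t ih =>
    rw [sum_univ_get_cons (fun _ b => if b = i then 1 else 0), List.count_cons, ih]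
    simp [add_comm]

lemma biasCount_of_count_left_eq_zero (s : List (Fin n)) {i : Fin n} (j : Fin n)
    (h : s.count i = 0) : biasCount s i j = 0 := by
  induction s with
  | nil => rfl
  | cons a t ih =>
    rw [List.count_cons] at h
    have ha : a ≠ i := by rintro rfl; simp at h
    simp [biasCount, ha, ih (by omega)]

lemma biasCount_of_count_right_eq_zero (s : List (Fin n)) (i : Fin n) {j : Fin n}
    (h : s.count j = 0) : biasCount s i j = 0 := by
  induction s with
  | nil => rfl
  | cons a t ih =>
    rw [List.count_cons] at h
    simp [biasCount, ih (by omega), show t.count j = 0 by omega]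

/-- Each occurrence of `i` at the 1-based position `k + 1` is preceded by exactly `k` spikes. -/
lemma sum_biasCount_left_add_count (s : List (Fin n)) (i : Fin n) :
    ∑ j : Fin n, biasCount s j i + s.count i =
      ∑ k : Fin s.length, if s.get k = i then (k : ℕ) + 1 else 0 := by
  induction s with
  | nil => simp [biasCount]
  | cons a t ih =>
    have shift : ∑ k : Fin t.length, (if t.get k = i then (k : ℕ) + 1 + 1 else 0) =
        (∑ j : Fin n, biasCount t j i + t.count i) + t.count i := by
      rw [ih, count_eq_sum_ite_get t i, ← sum_add_distrib]
      exact sum_congr rfl fun k _ => by split_ifs <;> rfl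
    rw [sum_univ_get_cons (fun k b => if b = i then k + 1 else 0)]
    simp only [biasCount, sum_add_distrib, sum_ite_eq, mem_univ, if_true, List.count_cons,
      beq_iff_eq, shift]
    split_ifs <;> omega

/-- Every spike of `i` forms an ordered pair with each of the other `ℓ - 1` spikes. -/
lemma sum_biasCount_add_sum_biasCount_add_count (s : List (Fin n)) (i : Fin n) :
    ∑ j : Fin n, biasCount s i j + ∑ j : Fin n, biasCount s j i + s.count i =
      s.count i * s.length := by
  induction s with
  | nil => simp [biasCount]
  | cons a t ih =>
    rcases eq_or_ne a i with rfl | hai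
    · simp only [biasCount, sum_add_distrib, sum_ite_eq, mem_univ, if_true, List.count_cons,
        beq_self_eq_true, List.length_cons, sum_count_eq_length]
      nlinarith
    · simp [biasCount, sum_add_distrib, sum_ite_eq, hai]
      nlinarith

lemma com_of_count_pos {s : List (Fin n)} {i : Fin n} (hi : 0 < s.count i) :
    com s i = (∑ j : Fin n, (biasCount s j i : ℝ) + s.count i) / s.count i := by
  rw [com, if_pos hi]
  congr 1
  exact_mod_cast (sum_biasCount_left_add_count s i).symm

lemma gamma_of_count_eq_zero {s : List (Fin n)} (hlen : 1 ≤ s.length) {i : Fin n}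
    (hi : s.count i = 0) : gamma s i = 0 := by
  have : (s.length : ℝ) ≠ 0 := by positivity
  rw [gamma, com, if_neg (by omega)]
  field_simp
  ring

lemma skewBias_of_count_right_eq_zero (s : List (Fin n)) (i : Fin n) {j : Fin n}
    (hj : s.count j = 0) : skewBias s i j = 0 := by
  simp [skewBias, hj]

lemma skewBias_mul_rate {s : List (Fin n)} {i : Fin n} (hi : 0 < s.count i) (j : Fin n) :
    skewBias s j i * rate s j =
      ((biasCount s j i : ℝ) - biasCount s i j) / (s.count i * s.length) := by
  rcases (s.count j).eq_zero_or_pos with hj | hj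
  · simp [skewBias, rate, hj, biasCount_of_count_left_eq_zero s i hj,
      biasCount_of_count_right_eq_zero s i hj]
  · have : (s.count j : ℝ) ≠ 0 := by positivity
    rw [skewBias, if_pos ⟨hj, hi⟩, rate]
    field_simp

end NeuralSeq

open NeuralSeq in
/-- `γ(s) = B_skew(s)ᵀ ρ(s)`. -/
theorem gamma_eq_Bskew_transpose_mulVec_rate {n : ℕ} (s : List (Fin n)) (hlen : 1 ≤ s.length) :
    ∀ i : Fin n, gamma s i = ∑ j : Fin n, skewBias s j i * rate s j := by
  intro i
  rcases (s.count i).eq_zero_or_pos with hi | hi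
  · simp [gamma_of_count_eq_zero hlen hi, skewBias_of_count_right_eq_zero s _ hi]
  have hpairs : (∑ j : Fin n, (biasCount s i j : ℝ)) + ∑ j : Fin n, (biasCount s j i : ℝ)
      + s.count i = s.count i * s.length := by
    exact_mod_cast sum_biasCount_add_sum_biasCount_add_count s i
  have hc : (s.count i : ℝ) ≠ 0 := by positivity
  have hℓ : (s.length : ℝ) ≠ 0 := by positivity
  rw [sum_congr rfl fun j _ => skewBias_mul_rate hi j, ← sum_div, sum_sub_distrib, gamma,
    com_of_count_pos hi]
  field_simp
  linarith
end

section
/- For any sequence s and any three distinct neurons i, j, k ∈ supp(s), the inequalities 0 ≤ b_{ij}(s) + b_{jk}(s) - b_{ik}(s) ≤ 1 hold (equivalently, 1 ≤ b_{ij}(s) + b_{jk}(s) + b_{ki}(s) ≤ 2). -/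
open Finset

/-! Clearing denominators, the claim reads `c_ik c_j ≤ c_ij c_k + c_jk c_i ≤ c_ik c_j + c_i c_j c_k`.
Prepending a spike of `i`, `j` or `k` to the sequence raises `c_ij c_k + c_jk c_i - c_ik c_j` by
`c_jk`, `c_i c_k - c_ik` or `c_ij` respectively; each increment lies between `0` and the
corresponding increment `c_j c_k`, `c_i c_k` or `c_i c_j` of `c_i c_j c_k`, so both inequalities
follow by induction on the sequence. -/

namespace NeuralSeq

variable {n : ℕ}

theorem biasCount_cons (a : Fin n) (t : List (Fin n)) (i j : Fin n) :
    biasCount (a :: t) i j = (if a = i then t.count j else 0) + biasCount t i j := rfl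

theorem biasCount_le_count_mul_count (s : List (Fin n)) (i j : Fin n) :
    biasCount s i j ≤ s.count i * s.count j := by
  induction s with
  | nil => simp [biasCount]
  | cons a t ih =>
    by_cases hai : a = i
    · subst hai
      rw [biasCount_cons, if_pos rfl, List.count_cons_self]
      nlinarith [List.count_le_count_cons (a := j) (b := a) (l := t)]
    · rw [biasCount_cons, if_neg hai, zero_add, List.count_cons_of_ne hai]
      exact ih.trans (Nat.mul_le_mul_left _ List.count_le_count_cons)

theorem biasCount_mul_count_le_add {i j k : Fin n} (hij : i ≠ j) (hjk : j ≠ k) (hik : i ≠ k)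
    (s : List (Fin n)) :
    biasCount s i k * s.count j ≤ biasCount s i j * s.count k + biasCount s j k * s.count i := by
  induction s with
  | nil => simp [biasCount]
  | cons a t ih =>
    simp only [biasCount_cons, List.count_cons, beq_iff_eq]
    by_cases hai : a = i
    · subst hai
      simp only [↓reduceIte, hij, hik, add_zero, zero_add]
      nlinarith
    by_cases haj : a = j
    · subst haj
      simp only [hai, hjk, ↓reduceIte, add_zero, zero_add]
      nlinarith [biasCount_le_count_mul_count t i k]
    by_cases hak : a = k
    · subst hak
      simp only [hai, haj, ↓reduceIte, add_zero, zero_add]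
      nlinarith
    · simpa [hai, haj, hak] using ih

theorem add_le_biasCount_mul_count_add {i j k : Fin n} (hij : i ≠ j) (hjk : j ≠ k) (hik : i ≠ k)
    (s : List (Fin n)) :
    biasCount s i j * s.count k + biasCount s j k * s.count i ≤
      biasCount s i k * s.count j + s.count i * s.count j * s.count k := by
  induction s with
  | nil => simp [biasCount]
  | cons a t ih =>
    simp only [biasCount_cons, List.count_cons, beq_iff_eq]
    by_cases hai : a = i
    · subst hai
      simp only [↓reduceIte, hij, hik, add_zero, zero_add]
      nlinarith [biasCount_le_count_mul_count t j k]
    by_cases haj : a = j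
    · subst haj
      simp only [hai, hjk, ↓reduceIte, add_zero, zero_add]
      nlinarith
    by_cases hak : a = k
    · subst hak
      simp only [hai, haj, ↓reduceIte, add_zero, zero_add]
      nlinarith [biasCount_le_count_mul_count t i j]
    · simpa [hai, haj, hak] using ih

end NeuralSeq

open NeuralSeq in
/-- for distinct active neurons, `0 ≤ b_ij + b_jk - b_ik ≤ 1`. -/
theorem probBias_triple_ineq {n : ℕ} (s : List (Fin n)) (i j k : Fin n)
    (hij : i ≠ j) (hjk : j ≠ k) (hik : i ≠ k)
    (hi : 0 < s.count i) (hj : 0 < s.count j) (hk : 0 < s.count k) :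
    0 ≤ probBias s i j + probBias s j k - probBias s i k ∧
      probBias s i j + probBias s j k - probBias s i k ≤ 1 := by
  have hci : (0 : ℝ) < s.count i := by exact_mod_cast hi
  have hcj : (0 : ℝ) < s.count j := by exact_mod_cast hj
  have hck : (0 : ℝ) < s.count k := by exact_mod_cast hk
  have lower : (biasCount s i k : ℝ) * s.count j ≤
      biasCount s i j * s.count k + biasCount s j k * s.count i := by
    exact_mod_cast biasCount_mul_count_le_add hij hjk hik s
  have upper : (biasCount s i j : ℝ) * s.count k + biasCount s j k * s.count i ≤
      biasCount s i k * s.count j + s.count i * s.count j * s.count k := by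
    exact_mod_cast add_le_biasCount_mul_count_add hij hjk hik s
  have common_denom : probBias s i j + probBias s j k - probBias s i k =
      ((biasCount s i j : ℝ) * s.count k + biasCount s j k * s.count i
        - biasCount s i k * s.count j) / (s.count i * s.count j * s.count k) := by
    unfold probBias
    field_simp
  rw [common_denom]
  constructor
  · exact div_nonneg (by linarith) (by positivity)
  · rw [div_le_one (by positivity)]
    linarith
end

section
/- For any sequence s and any three distinct neurons i, j, k ∈ supp(s), the inequalities -1 ≤ β_{ij}(s) + β_{jk}(s) - β_{ik}(s) ≤ 1 hold. -/
open Finset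

/-!
Write `p_{ij} = c_{ij}/(c_i c_j)` (`probBias`). For `i ≠ j` every pair of an `i`-spike and a
`j`-spike is ordered one way or the other, so `p_{ij} + p_{ji} = 1` and `β_{ij} = 2 p_{ij} - 1`;
the claim becomes `0 ≤ p_{ij} + p_{jk} - p_{ik} ≤ 1`. Both bounds are the triangle inequality
`p_{ik} ≤ p_{ij} + p_{jk}`, applied to `(i, j, k)` and to `(k, j, i)`. It holds because, given an
`i`-spike before a `k`-spike, any `j`-spike comes after the `i`-spike or before the `k`-spike,
whence `c_j c_{ik} ≤ c_k c_{ij} + c_i c_{jk}`.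
-/

namespace NeuralSeq

variable {n : ℕ}

theorem biasCount_add_biasCount_swap (s : List (Fin n)) {i j : Fin n} (hij : i ≠ j) :
    biasCount s i j + biasCount s j i = s.count i * s.count j := by
  induction s with
  | nil => rfl
  | cons a t ih =>
    simp only [biasCount, List.count_cons, beq_iff_eq]
    split_ifs <;> subst_vars <;> first | contradiction | nlinarith

theorem count_mul_biasCount_le (s : List (Fin n)) (i j k : Fin n) :
    s.count j * biasCount s i k ≤ s.count k * biasCount s i j + s.count i * biasCount s j k := by
  induction s with
  | nil => simp [biasCount]
  | cons a t ih =>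
    have hle := biasCount_le_count_mul_count t i k
    simp only [biasCount, List.count_cons, beq_iff_eq]
    split_ifs <;> nlinarith

theorem probBias_add_probBias_swap (s : List (Fin n)) {i j : Fin n} (hij : i ≠ j)
    (hi : 0 < s.count i) (hj : 0 < s.count j) :
    probBias s i j + probBias s j i = 1 := by
  have hsum : (biasCount s i j : ℝ) + biasCount s j i = s.count i * s.count j := by
    exact_mod_cast biasCount_add_biasCount_swap s hij
  unfold probBias
  rw [mul_comm (s.count j : ℝ), ← add_div, hsum, div_self (by positivity)]

theorem skewBias_eq_two_mul_probBias_sub_one (s : List (Fin n)) {i j : Fin n} (hij : i ≠ j)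
    (hi : 0 < s.count i) (hj : 0 < s.count j) :
    skewBias s i j = 2 * probBias s i j - 1 := by
  have hswap := probBias_add_probBias_swap s hij hi hj
  rw [skewBias, if_pos ⟨hi, hj⟩, sub_div]
  unfold probBias at hswap ⊢
  rw [mul_comm (s.count i : ℝ)] at hswap ⊢
  linarith

theorem probBias_triangle (s : List (Fin n)) {i j k : Fin n}
    (hi : 0 < s.count i) (hj : 0 < s.count j) (hk : 0 < s.count k) :
    probBias s i k ≤ probBias s i j + probBias s j k := by
  have key : (s.count j * biasCount s i k : ℝ) ≤
      s.count k * biasCount s i j + s.count i * biasCount s j k := by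
    exact_mod_cast count_mul_biasCount_le s i j k
  unfold probBias
  rw [div_add_div _ _ (by positivity) (by positivity), div_le_div_iff₀ (by positivity)
    (by positivity)]
  have hpos : (0 : ℝ) ≤ s.count i * s.count j * s.count k := by positivity
  nlinarith [mul_le_mul_of_nonneg_left key hpos]

end NeuralSeq

open NeuralSeq in
/-- for distinct active neurons, `-1 ≤ β_ij + β_jk - β_ik ≤ 1`. -/
theorem skewBias_triple_ineq {n : ℕ} (s : List (Fin n)) (i j k : Fin n)
    (hij : i ≠ j) (hjk : j ≠ k) (hik : i ≠ k)
    (hi : 0 < s.count i) (hj : 0 < s.count j) (hk : 0 < s.count k) :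
    -1 ≤ skewBias s i j + skewBias s j k - skewBias s i k ∧
      skewBias s i j + skewBias s j k - skewBias s i k ≤ 1 := by
  rw [skewBias_eq_two_mul_probBias_sub_one s hij hi hj,
    skewBias_eq_two_mul_probBias_sub_one s hjk hj hk,
    skewBias_eq_two_mul_probBias_sub_one s hik hi hk]
  have forward := probBias_triangle s hi hj hk
  have backward := probBias_triangle s hk hj hi
  have swap_ij := probBias_add_probBias_swap s hij hi hj
  have swap_jk := probBias_add_probBias_swap s hjk hj hk
  have swap_ik := probBias_add_probBias_swap s hik hi hk
  constructor <;> linarith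
end

section
/- If s is a sequence on the neuron set N = {1,...,n} and i ∈ supp(s), then com_i(s) = 1 + (1/c_i(s)) · Σ_{j=1}^n c_{ji}(s). -/
open Finset

namespace NeuralSeq

theorem sum_biasCount_cons_left {n : ℕ} (a : Fin n) (t : List (Fin n)) (i : Fin n) :
    ∑ j : Fin n, biasCount (a :: t) j i = t.count i + ∑ j : Fin n, biasCount t j i := by
  simp only [biasCount, sum_add_distrib, sum_ite_eq, mem_univ, if_true]

/-- `∑ j, c_{ji}(s)` counts the pairs `k' < k` with `s_k = i`, i.e. it is the sum of the
0-based positions of `i` in `s`. The offset `m` is what makes the induction on `cons` go through. -/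
theorem sum_index_add_eq_sum_biasCount_add {n : ℕ} (s : List (Fin n)) (i : Fin n) (m : ℕ) :
    ∑ k : Fin s.length, (if s.get k = i then (k : ℕ) + m else 0) =
      ∑ j : Fin n, biasCount s j i + m * s.count i := by
  induction s generalizing m with
  | nil => simp [biasCount]
  | cons a t ih =>
    refine (Fin.sum_univ_succ (n := t.length) _).trans ?_
    have hshift : ∀ k : Fin t.length, (k.succ : ℕ) + m = k + (m + 1) := fun k => by
      rw [Fin.val_succ]; ring
    simp only [List.get_cons_zero, List.get_cons_succ', hshift, Fin.val_zero, ih,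
      sum_biasCount_cons_left, List.count_cons, beq_iff_eq]
    by_cases ha : a = i <;> simp only [ha, ↓reduceIte] <;> ring

end NeuralSeq

open NeuralSeq in
/-- for an active neuron `i`, `com_i(s) = 1 + (1/c_i(s)) Σ_j c_{ji}(s)`. -/
theorem com_from_biasCounts {n : ℕ} (s : List (Fin n)) (i : Fin n) (hi : 0 < s.count i) :
    com s i = 1 + (1 / (s.count i : ℝ)) * ∑ j : Fin n, (biasCount s j i : ℝ) := by
  have hsum : (∑ k : Fin s.length, if s.get k = i then ((k : ℕ) + 1 : ℝ) else 0) =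
      ∑ j : Fin n, (biasCount s j i : ℝ) + s.count i := by
    have hnat := sum_index_add_eq_sum_biasCount_add s i 1
    rw [one_mul] at hnat
    exact_mod_cast hnat
  have hc : (s.count i : ℝ) ≠ 0 := by positivity
  rw [com, if_pos hi, hsum]
  field_simp
  ring
end

section
/- Let s and s' be sequences on the neuron set N = {1,...,n} with supp(s) = supp(s') = N. Then C(s) = C(s') if and only if B_prob(s) = B_prob(s'); moreover, if C(s) = C(s') then B_skew(s) = B_skew(s'). -/
open Finset

/-!
The diagonal entries determine the spike counts: `c_{ii}(s) = (c_i choose 2)` and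
`b_{ii}(s) = (1 - 1/c_i)/2` are both injective in `c_i ≥ 1`. Once the spike counts agree,
`b_{ij}` and `β_{ij}` are `c_{ij}` and `c_{ij} - c_{ji}` divided by the same positive number.
-/

namespace NeuralSeq

variable {n : ℕ} {s s' : List (Fin n)} {i j : Fin n}

theorem biasCount_self (s : List (Fin n)) (i : Fin n) :
    biasCount s i i = (s.count i).choose 2 := by
  induction s with
  | nil => rfl
  | cons a t ih =>
    rw [biasCount, ih, List.count_cons]
    by_cases h : a = i
    · simp [h, Nat.choose_succ_succ]
    · simp [h]

theorem _root_.Nat.choose_two_strictMonoOn :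
    StrictMonoOn (fun c : ℕ => c.choose 2) (Set.Ici 1) := by
  intro a ha b _ hab
  calc a.choose 2 < a.choose 2 + a := Nat.lt_add_of_pos_right ha
    _ = (a + 1).choose 2 := by rw [Nat.choose_succ_succ', Nat.choose_one_right, add_comm]
    _ ≤ b.choose 2 := Nat.choose_le_choose 2 hab

theorem count_eq_of_biasCount_self_eq (hi : 0 < s.count i) (hi' : 0 < s'.count i)
    (h : biasCount s i i = biasCount s' i i) : s.count i = s'.count i :=
  Nat.choose_two_strictMonoOn.injOn hi hi' (by simpa only [biasCount_self] using h)

theorem probBias_self (hi : 0 < s.count i) :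
    probBias s i i = (1 - (s.count i : ℝ)⁻¹) / 2 := by
  have : (s.count i : ℝ) ≠ 0 := by positivity
  rw [probBias, biasCount_self, Nat.cast_choose_two]
  field_simp

theorem count_eq_of_probBias_self_eq (hi : 0 < s.count i) (hi' : 0 < s'.count i)
    (h : probBias s i i = probBias s' i i) : s.count i = s'.count i := by
  rw [probBias_self hi, probBias_self hi'] at h
  exact_mod_cast inv_injective (by linarith : (s.count i : ℝ)⁻¹ = (s'.count i : ℝ)⁻¹)

theorem probBias_eq_probBias_iff (hi : s.count i = s'.count i) (hj : s.count j = s'.count j)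
    (hi₀ : 0 < s.count i) (hj₀ : 0 < s.count j) :
    probBias s i j = probBias s' i j ↔ biasCount s i j = biasCount s' i j := by
  rw [probBias, probBias, ← hi, ← hj, div_left_inj' (by positivity), Nat.cast_inj]

end NeuralSeq

open NeuralSeq in
/-- for full-support sequences, `C(s) = C(s')` iff `B_prob(s) = B_prob(s')`,
and either implies `B_skew(s) = B_skew(s')`. -/
theorem biasCount_eq_iff_probBias_eq {n : ℕ} (s s' : List (Fin n))
    (hs : ∀ i : Fin n, 0 < s.count i) (hs' : ∀ i : Fin n, 0 < s'.count i) :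
    ((∀ i j : Fin n, biasCount s i j = biasCount s' i j) ↔
      (∀ i j : Fin n, probBias s i j = probBias s' i j)) ∧
    ((∀ i j : Fin n, biasCount s i j = biasCount s' i j) →
      ∀ i j : Fin n, skewBias s i j = skewBias s' i j) := by
  have count_eq_of_biasCount_eq (h : ∀ i j, biasCount s i j = biasCount s' i j) (i : Fin n) :
      s.count i = s'.count i :=
    count_eq_of_biasCount_self_eq (hs i) (hs' i) (h i i)
  have count_eq_of_probBias_eq (h : ∀ i j, probBias s i j = probBias s' i j) (i : Fin n) :
      s.count i = s'.count i :=
    count_eq_of_probBias_self_eq (hs i) (hs' i) (h i i)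
  refine ⟨⟨fun h i j => ?_, fun h i j => ?_⟩, fun h i j => ?_⟩
  · have hi := count_eq_of_biasCount_eq h i
    exact (probBias_eq_probBias_iff hi (count_eq_of_biasCount_eq h j) (hs i) (hs j)).2 (h i j)
  · have hi := count_eq_of_probBias_eq h i
    exact (probBias_eq_probBias_iff hi (count_eq_of_probBias_eq h j) (hs i) (hs j)).1 (h i j)
  · simp only [skewBias, h, count_eq_of_biasCount_eq h]
end

section
/- Let s be a sequence on the neuron set N = {1,...,n}, let k ≥ 2, and let v = (v_1,...,v_{k-1}) be a list of k-1 distinct neurons with underlying set V. Let U be the set of all length-k lists of distinct neurons obtained from v by inserting some neuron w ∈ N \ V at one of the k possible positions (before v_1, between consecutive entries, or after v_{k-1}). Then c_v(s) · Σ_{w ∈ N \ V} c_w(s) = Σ_{u ∈ U} c_u(s). In particular, when Σ_{w ∈ N \ V} c_w(s) > 0, the order-(k-1) bias count c_v(s) is computable from the order-k bias counts and the spike counts. -/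
open Finset

/-!
Pairing an occurrence of `v` in `s` with a spike of a neuron `w ∉ v` gives an occurrence of
`v.insertIdx m w`, where `m` is the number of entries of the occurrence that precede the spike,
and every occurrence of a list obtained by inserting `w` into `v` arises this way exactly once.
-/

namespace NeuralSeq

variable {n : ℕ}

lemma orderCount_nil_of_ne_nil {v : List (Fin n)} (hv : v ≠ []) : orderCount [] v = 0 := by
  cases v with
  | nil => exact absurd rfl hv
  | cons x xs => rfl

@[simp]
lemma orderCount_singleton (s : List (Fin n)) (w : Fin n) :
    orderCount s [w] = s.count w := by
  induction s with
  | nil => rfl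
  | cons a t ih => by_cases h : a = w <;> simp [orderCount, ih, h, add_comm]

lemma sum_orderCount_insertIdx (s v : List (Fin n)) {w : Fin n} (hw : w ∉ v) :
    ∑ m ∈ Finset.range (v.length + 1), orderCount s (v.insertIdx m w) =
      orderCount s v * s.count w := by
  induction s generalizing v with
  | nil =>
    refine Finset.sum_eq_zero fun m hm => orderCount_nil_of_ne_nil <| List.ne_nil_of_length_pos ?_
    rw [List.length_insertIdx_of_le_length (by simpa [Nat.lt_succ_iff] using hm)]
    exact Nat.succ_pos _
  | cons a t ih =>
    cases v with
    | nil => simp [orderCount]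
    | cons x vs =>
      have hwx : w ≠ x := fun h => hw (h ▸ List.mem_cons_self)
      have htail := ih vs fun h => hw (List.mem_cons_of_mem x h)
      have hfull := ih (x :: vs) hw
      rw [Finset.sum_range_succ'] at hfull ⊢
      simp only [List.insertIdx_succ_cons, List.insertIdx_zero, List.length_cons, orderCount,
        Finset.sum_add_distrib, List.count_cons, beq_iff_eq] at hfull ⊢
      -- the first spike `a` extends occurrences as `w` (position 0) or as `x`, never both
      by_cases haw : a = w
      · subst haw
        simp only [hwx, ↓reduceIte, sum_const_zero, zero_add]
        linarith
      · by_cases hax : a = x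
        · subst hax
          simp only [↓reduceIte, haw, zero_add, add_zero]
          rw [htail, add_assoc, hfull, add_mul]
        · simp only [hax, ↓reduceIte, sum_const_zero, zero_add, haw, add_zero]
          linarith

end NeuralSeq

open NeuralSeq in
theorem lower_order_bias_from_higher_general {n : ℕ} (s : List (Fin n))
    (v : List (Fin n)) :
    orderCount s v * ∑ w ∈ Finset.univ \ v.toFinset, s.count w =
      ∑ w ∈ Finset.univ \ v.toFinset, ∑ m ∈ Finset.range (v.length + 1),
        orderCount s (v.insertIdx m w) := by
  rw [Finset.mul_sum]
  refine Finset.sum_congr rfl fun w hw => ?_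
  have hwv : w ∉ v := fun h => (Finset.mem_sdiff.mp hw).2 (List.mem_toFinset.mpr h)
  exact (sum_orderCount_insertIdx s v hwv).symm

open NeuralSeq in
/-- the order-`(k-1)` bias count `c_v(s)` times the total spike count of the
neurons outside `v` equals the sum of the order-`k` bias counts over all lists obtained by
inserting one such neuron into `v` at one of the `k` possible positions. -/
theorem lower_order_bias_from_higher {n : ℕ} (s : List (Fin n))
    (v : List (Fin n)) (hv : v.Nodup) (hlen : 1 ≤ v.length) :
    orderCount s v * ∑ w ∈ Finset.univ \ v.toFinset, s.count w =
      ∑ w ∈ Finset.univ \ v.toFinset, ∑ m ∈ Finset.range (v.length + 1),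
        orderCount s (v.insertIdx m w) :=
  lower_order_bias_from_higher_general s v
end

section
/- Let s = (s_1,...,s_ℓ) be a sequence and let k_1, k_2 be indices with k_1 + 1 < k_2 and k_2 + 1 ≤ ℓ, such that s_{k_1} = s_{k_2+1} and s_{k_2} = s_{k_1+1}. Let π be the permutation of {1,...,ℓ} that swaps k_1 with k_1+1 and swaps k_2 with k_2+1, fixing all other indices. Then C(s) = C(s^π), i.e., c_{ij}(s) = c_{ij}(s^π) for all neurons i, j. -/
open Finset

/-! Exchanging two adjacent entries `a, b` of a sequence lowers `c_{ab}` by one, raises `c_{ba}`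
by one and leaves every other bias count alone. The permutation first exchanges an adjacent
pair `a, b` and then an adjacent pair `b, a`, so the two changes cancel. -/

namespace NeuralSeq

variable {n : ℕ}

theorem biasCount_append_cons_cons_add (l₁ l₂ : List (Fin n)) (a b i j : Fin n) :
    biasCount (l₁ ++ a :: b :: l₂) i j + (if b = i ∧ a = j then 1 else 0)
      = biasCount (l₁ ++ b :: a :: l₂) i j + (if a = i ∧ b = j then 1 else 0) := by
  induction l₁ with
  | nil =>
    simp only [List.nil_append, biasCount, List.count_cons]
    split_ifs <;> simp_all <;> omega
  | cons x t ih =>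
    have hcount : (t ++ a :: b :: l₂).count j = (t ++ b :: a :: l₂).count j := by
      simp only [List.count_append, List.count_cons]
      omega
    simp only [List.cons_append, biasCount, hcount]
    omega

theorem biasCount_add_of_swap_adjacent {l l' : List (Fin n)} {k : ℕ} (hk : k + 1 < l.length)
    (hlen : l'.length = l.length) (hk₀ : l'[k] = l[k + 1]) (hk₁ : l'[k + 1] = l[k])
    (hrest : ∀ m (hm : m < l.length), m ≠ k → m ≠ k + 1 → l'[m] = l[m]) (i j : Fin n) :
    biasCount l i j + (if l[k + 1] = i ∧ l[k] = j then 1 else 0)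
      = biasCount l' i j + (if l[k] = i ∧ l[k + 1] = j then 1 else 0) := by
  have hsplit : ∀ x : List (Fin n), (hx : k + 1 < x.length) →
      x = x.take k ++ x[k] :: x[k + 1] :: x.drop (k + 2) := fun x hx => by
    rw [← List.drop_eq_getElem_cons hx, ← List.drop_eq_getElem_cons (by omega),
      List.take_append_drop]
  have htake : l'.take k = l.take k :=
    List.ext_getElem (by simp [hlen]) fun m hm _ => by
      rw [List.length_take] at hm
      simp only [List.getElem_take]
      exact hrest m (by omega) (by omega) (by omega)
  have hdrop : l'.drop (k + 2) = l.drop (k + 2) :=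
    List.ext_getElem (by simp [hlen]) fun m hm _ => by
      rw [List.length_drop] at hm
      simp only [List.getElem_drop]
      exact hrest _ (by omega) (by omega) (by omega)
  have hl' : l' = l.take k ++ l[k + 1] :: l[k] :: l.drop (k + 2) := by
    refine (hsplit l' (by omega)).trans ?_
    rw [htake, hdrop, hk₀, hk₁]
  have := biasCount_append_cons_cons_add (l.take k) (l.drop (k + 2)) l[k] l[k + 1] i j
  rwa [← hsplit l hk, ← hl'] at this

@[simp]
theorem length_shuffle (s : List (Fin n)) (π : Equiv.Perm (Fin s.length)) :
    (shuffle s π).length = s.length := by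
  simp [shuffle]

@[simp]
theorem getElem_shuffle (s : List (Fin n)) (π : Equiv.Perm (Fin s.length)) (m : ℕ)
    (hm : m < (shuffle s π).length) :
    (shuffle s π)[m] = s.get (π ⟨m, by simpa using hm⟩) := by
  simp [shuffle]

theorem shuffle_one (s : List (Fin n)) : shuffle s 1 = s :=
  List.ext_getElem (by simp) fun m _ _ => by simp

theorem biasCount_shuffle_mul_swap_add (s : List (Fin n)) (π : Equiv.Perm (Fin s.length))
    (k : ℕ) (hk : k + 1 < s.length) {a b : Fin n} (ha : s.get (π ⟨k, by omega⟩) = a)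
    (hb : s.get (π ⟨k + 1, hk⟩) = b) (i j : Fin n) :
    biasCount (shuffle s π) i j + (if b = i ∧ a = j then 1 else 0)
      = biasCount (shuffle s (π * Equiv.swap ⟨k, by omega⟩ ⟨k + 1, hk⟩)) i j
        + (if a = i ∧ b = j then 1 else 0) := by
  have := biasCount_add_of_swap_adjacent (l := shuffle s π)
    (l' := shuffle s (π * Equiv.swap ⟨k, by omega⟩ ⟨k + 1, hk⟩)) (by simpa using hk) (by simp)
    (by simp) (by simp) (fun m _ hmk hmk' => by
      simp [Equiv.swap_apply_of_ne_of_ne, Fin.ext_iff, hmk, hmk']) i j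
  simpa only [getElem_shuffle, ha, hb] using this

end NeuralSeq

open NeuralSeq in
/-- swapping the adjacent pairs at `k₁, k₁+1` and at `k₂, k₂+1`, where
`s_{k₁} = s_{k₂+1}` and `s_{k₂} = s_{k₁+1}`, leaves the bias-count matrix unchanged.
(Indices are 0-based here.) -/
theorem double_adjacent_swap_preserves_biasCounts {n : ℕ} (s : List (Fin n))
    (k₁ k₂ : ℕ) (h₁ : k₁ + 1 < k₂) (h₂ : k₂ + 1 < s.length)
    (hs₁ : s.get ⟨k₁, by omega⟩ = s.get ⟨k₂ + 1, by omega⟩)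
    (hs₂ : s.get ⟨k₂, by omega⟩ = s.get ⟨k₁ + 1, by omega⟩) :
    ∀ i j : Fin n,
      biasCount s i j =
        biasCount
          (shuffle s
            (Equiv.swap (⟨k₁, by omega⟩ : Fin s.length) ⟨k₁ + 1, by omega⟩ *
             Equiv.swap (⟨k₂, by omega⟩ : Fin s.length) ⟨k₂ + 1, by omega⟩)) i j := by
  intro i j
  set a := s.get ⟨k₁, by omega⟩
  set b := s.get ⟨k₁ + 1, by omega⟩
  have hσ₁_fix : ∀ m (hm : m < s.length), m = k₂ ∨ m = k₂ + 1 →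
      Equiv.swap (⟨k₁, by omega⟩ : Fin s.length) ⟨k₁ + 1, by omega⟩ ⟨m, hm⟩ = ⟨m, hm⟩ :=
    fun m hm hm' => Equiv.swap_apply_of_ne_of_ne
      (Fin.ne_of_val_ne (show m ≠ k₁ by omega)) (Fin.ne_of_val_ne (show m ≠ k₁ + 1 by omega))
  have hswap₁ := biasCount_shuffle_mul_swap_add s 1 k₁ (by omega) (a := a) (b := b) rfl rfl i j
  have hswap₂ := biasCount_shuffle_mul_swap_add s (Equiv.swap ⟨k₁, by omega⟩ ⟨k₁ + 1, by omega⟩)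
    k₂ h₂ (a := b) (b := a) (by rw [hσ₁_fix _ _ (.inl rfl), hs₂])
    (by rw [hσ₁_fix _ _ (.inr rfl), hs₁]) i j
  rw [one_mul, shuffle_one] at hswap₁
  omega
end

section
/- Every matrix in the convex hull of the set of skew-bias matrices of sequences that list each neuron of N = {1,...,n} exactly once satisfies all of the consistent-bias inequalities: if M = [m_{ij}] is such a matrix, then -1 ≤ m_{ij} ≤ 1 for all i < j, and -1 ≤ m_{ij} + m_{jk} - m_{ik} ≤ 1 for all i < j < k. That is, the fundamental polytope is contained in the consistent-bias polytope. -/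
/-!
In a sequence listing each neuron exactly once, `β_{ij}` is `1` or `-1` according to whether
`i` comes before or after `j`, so each vertex of the fundamental polytope has entries in
`[-1, 1]`, and `β_{ij} + β_{jk} - β_{ik}` is `±1` whatever the relative order of the three
positions. The consistent-bias polytope is cut out by linear inequalities, hence convex, so it
contains the convex hull of these vertices.
-/

open Finset

namespace NeuralSeq

variable {n : ℕ}

lemma biasCount_eq_zero_of_notMem_left {s : List (Fin n)} {i : Fin n} (hi : i ∉ s)
    (j : Fin n) : biasCount s i j = 0 := by
  induction s with
  | nil => rfl
  | cons a t ih =>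
    rw [List.mem_cons, not_or] at hi
    simp [biasCount, Ne.symm hi.1, ih hi.2]

lemma biasCount_eq_zero_of_notMem_right {s : List (Fin n)} {j : Fin n} (hj : j ∉ s)
    (i : Fin n) : biasCount s i j = 0 := by
  induction s with
  | nil => rfl
  | cons a t ih =>
    rw [List.mem_cons, not_or] at hj
    simp [biasCount, List.count_eq_zero_of_not_mem hj.2, ih hj.2]

theorem biasCount_of_nodup {s : List (Fin n)} (hs : s.Nodup) {i j : Fin n} (hij : i ≠ j)
    (hi : i ∈ s) (hj : j ∈ s) :
    biasCount s i j = if s.idxOf i < s.idxOf j then 1 else 0 := by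
  induction s with
  | nil => simp at hi
  | cons a t ih =>
    rw [List.nodup_cons] at hs
    obtain rfl | hai := eq_or_ne a i
    · have hjt : j ∈ t := (List.mem_cons.1 hj).resolve_left hij.symm
      simp [biasCount, List.count_eq_one_of_mem hs.2 hjt, biasCount_eq_zero_of_notMem_left hs.1,
        List.idxOf_cons_ne _ hij]
    obtain rfl | haj := eq_or_ne a j
    · simp [biasCount, hai, biasCount_eq_zero_of_notMem_right hs.1]
    have hit : i ∈ t := (List.mem_cons.1 hi).resolve_left hai.symm
    have hjt : j ∈ t := (List.mem_cons.1 hj).resolve_left haj.symm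
    simp [biasCount, hai, ih hs.2 hit hjt, List.idxOf_cons_ne _ hai, List.idxOf_cons_ne _ haj]

def orderSign {α : Type*} [LinearOrder α] (a b : α) : ℝ := if a < b then 1 else -1

lemma orderSign_mem_Icc {α : Type*} [LinearOrder α] (a b : α) :
    orderSign a b ∈ Set.Icc (-1) 1 := by
  unfold orderSign
  split_ifs <;> norm_num

lemma orderSign_add_orderSign_sub_mem_Icc {α : Type*} [LinearOrder α] (a b c : α) :
    orderSign a b + orderSign b c - orderSign a c ∈ Set.Icc (-1) 1 := by
  unfold orderSign
  split_ifs <;> first | (exfalso; order) | norm_num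

theorem skewBias_of_count_eq_one {t : List (Fin n)} (ht : ∀ i, t.count i = 1) {i j : Fin n}
    (hij : i ≠ j) : skewBias t i j = orderSign (t.idxOf i) (t.idxOf j) := by
  have hnd : t.Nodup := List.nodup_iff_count_le_one.2 fun a => (ht a).le
  have hmem (a : Fin n) : a ∈ t := List.count_pos_iff.1 (by rw [ht a]; exact one_pos)
  have hne : t.idxOf i ≠ t.idxOf j := (List.idxOf_inj (hmem i)).not.2 hij
  rw [skewBias, if_pos (by simp [ht]), biasCount_of_nodup hnd hij (hmem i) (hmem j),
    biasCount_of_nodup hnd hij.symm (hmem j) (hmem i), ht, ht, orderSign]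
  rcases hne.lt_or_gt with h | h <;> simp [h, h.not_gt]

def consistentBiasPolytope (n : ℕ) : Set (Matrix (Fin n) (Fin n) ℝ) :=
  {M | (∀ i j : Fin n, i < j → M i j ∈ Set.Icc (-1) 1) ∧
    ∀ i j k : Fin n, i < j → j < k → M i j + M j k - M i k ∈ Set.Icc (-1) 1}

theorem convex_consistentBiasPolytope (n : ℕ) : Convex ℝ (consistentBiasPolytope n) := by
  let e (i j : Fin n) := Matrix.entryLinearMap ℝ ℝ i j
  simp only [consistentBiasPolytope, Set.ofPred_and, Set.ofPred_forall]
  exact .inter (convex_iInter fun i => convex_iInter fun j => convex_iInter fun _ =>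
      (convex_Icc _ _).linear_preimage (e i j))
    (convex_iInter fun i => convex_iInter fun j => convex_iInter fun k => convex_iInter fun _ =>
      convex_iInter fun _ => (convex_Icc _ _).linear_preimage (e i j + e j k - e i k))

theorem Bskew_mem_consistentBiasPolytope {t : List (Fin n)} (ht : ∀ i, t.count i = 1) :
    Bskew t ∈ consistentBiasPolytope n := by
  refine ⟨fun i j hij => ?_, fun i j k hij hjk => ?_⟩
  · simpa [Bskew, skewBias_of_count_eq_one ht hij.ne] using orderSign_mem_Icc _ _
  · simpa [Bskew, skewBias_of_count_eq_one ht hij.ne, skewBias_of_count_eq_one ht hjk.ne,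
      skewBias_of_count_eq_one ht (hij.trans hjk).ne] using
      orderSign_add_orderSign_sub_mem_Icc (t.idxOf i) (t.idxOf j) (t.idxOf k)

end NeuralSeq

open NeuralSeq in
/-- the fundamental polytope (convex hull of the skew-bias matrices of
one-spike-per-neuron sequences) is contained in the consistent-bias polytope. -/
theorem fundamental_polytope_subset_consistent {n : ℕ} (M : Matrix (Fin n) (Fin n) ℝ)
    (hM : M ∈ convexHull ℝ {A : Matrix (Fin n) (Fin n) ℝ |
        ∃ t : List (Fin n), (∀ i : Fin n, t.count i = 1) ∧ A = Bskew t}) :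
    (∀ i j : Fin n, i < j → -1 ≤ M i j ∧ M i j ≤ 1) ∧
    (∀ i j k : Fin n, i < j → j < k →
      -1 ≤ M i j + M j k - M i k ∧ M i j + M j k - M i k ≤ 1) :=
  convexHull_min (by rintro _ ⟨t, ht, rfl⟩; exact Bskew_mem_consistentBiasPolytope ht)
    (convex_consistentBiasPolytope n) hM
end
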